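/- Let t: Dom(t) ⊆ E → F be a densely defined A-linear operator between Hilbert A-modules such that the graph of t is orthogonally complemented in E ⊕ F and Ran(P_F P_{G(t)^⊥}) is dense in its biorthogonal complement. Then the operator 1 + t*t: Dom(t*t) → E is surjective. -/

import Mathlib

/- Framework: Hilbert C*-modules over a C*-algebra `A` (via Mathlib's `CStarModule`),
densely defined operators as `LinearPMap`s, `A`-valued orthogonality, adjoints,
regularity, graphs inside `E ⊕ F`. -/

open scoped InnerProductSpace RightActions WithCStarModule

/-- The Hilbert C⋆-module class as it stood in Mathlib (Dec 2024): a right `A`-module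
(`SMul Aᵐᵒᵖ E`) with inner product `A`-linear on the right in the second argument.
Mathlib's current `CStarModule` uses a left action `SMul A E` instead. -/
class RightCStarModule (A : outParam Type*) (E : Type*) [NonUnitalSemiring A] [StarRing A]
    [Module ℂ A] [AddCommGroup E] [Module ℂ E] [PartialOrder A] [SMul Aᵐᵒᵖ E] [Norm A] [Norm E]
    extends Inner A E where
  inner_add_right {x} {y} {z} : inner x (y + z) = inner x y + inner x z
  inner_self_nonneg {x} : 0 ≤ inner x x
  inner_self {x} : inner x x = 0 ↔ x = 0
  inner_op_smul_right {a : A} {x y : E} : inner x (y <• a) = inner x y * a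
  inner_smul_right_complex {z : ℂ} {x} {y} : inner x (z • y) = z • inner x y
  star_inner x y : star (inner x y) = inner y x
  norm_eq_sqrt_norm_inner_self x : ‖x‖ = √‖inner x x‖

/-- The old (Dec 2024) type synonym `C⋆ᵐᵒᵈ E` (without the algebra as an argument). -/
def OldWithCStarModule (E : Type*) := E

/-- The canonical equivalence between `OldWithCStarModule E` and `E`. -/
def OldWithCStarModule.equiv (E : Type*) : OldWithCStarModule E ≃ E := Equiv.refl _

instance OldWithCStarModule.instAddCommGroup {E : Type*} [AddCommGroup E] :
    AddCommGroup (OldWithCStarModule E) := ‹AddCommGroup E›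

/-- The `A`-valued inner product on `E ⊕ F`, as in the old Mathlib instance. -/
instance OldWithCStarModule.instInnerProd {A E F : Type*} [Add A] [Inner A E] [Inner A F] :
    Inner A (OldWithCStarModule (E × F)) where
  inner x y := Inner.inner A (OldWithCStarModule.equiv (E × F) x).1
      (OldWithCStarModule.equiv (E × F) y).1 +
    Inner.inner A (OldWithCStarModule.equiv (E × F) x).2 (OldWithCStarModule.equiv (E × F) y).2

namespace RegularOperators

variable (A : Type*) [NonUnitalCStarAlgebra A] [PartialOrder A] [StarOrderedRing A]

section Defs

variable {E F : Type*}
  [NormedAddCommGroup E] [Module ℂ E] [SMul Aᵐᵒᵖ E] [RightCStarModule A E]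
  [NormedAddCommGroup F] [Module ℂ F] [SMul Aᵐᵒᵖ F] [RightCStarModule A F]

/-- Orthogonal complement of a subset w.r.t. the `A`-valued inner product. -/
def ortho {E : Type*} [Inner A E] (S : Set E) : Set E := {y | ∀ u ∈ S, ⟪u, y⟫_A = 0}

/-- `S` is orthogonally complemented (an orthogonal summand): every element of `E`
decomposes as a sum of an element of `S` and an element of `S^⊥`. -/
def OrthoComplemented {E : Type*} [Add E] [Inner A E] (S : Set E) : Prop := ∀ z : E, ∃ u ∈ S, ∃ v ∈ ortho A S, z = u + v

/-- A partially defined operator is `A`-linear (for the right `A`-module action). -/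
def AModuleMap (t : E →ₗ.[ℂ] F) : Prop :=
  ∀ (a : A) (x : t.domain), ∃ hx : (x : E) <• a ∈ t.domain, t ⟨(x : E) <• a, hx⟩ = (t x) <• a

/-- Kernel of a partially defined operator, as a subset of `E`. -/
def kerSet (t : E →ₗ.[ℂ] F) : Set E := {x | ∃ hx : x ∈ t.domain, t ⟨x, hx⟩ = 0}

/-- Range of a partially defined operator. -/
def ranSet (t : E →ₗ.[ℂ] F) : Set F := {y | ∃ x : t.domain, t x = y}

/-- Domain of the adjoint: those `y` for which some `z` satisfies `⟪tx, y⟫ = ⟪x, z⟫`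
for all `x` in the domain of `t`. -/
def adjDomain (t : E →ₗ.[ℂ] F) : Set F :=
  {y | ∃ z : E, ∀ x : t.domain, ⟪t x, y⟫_A = ⟪(x : E), z⟫_A}

/-- `s` is the adjoint operator `t*` of `t`. -/
structure IsAdjoint (t : E →ₗ.[ℂ] F) (s : F →ₗ.[ℂ] E) : Prop where
  dom : (s.domain : Set F) = adjDomain A t
  inner_eq : ∀ (x : t.domain) (y : s.domain), ⟪t x, (y : F)⟫_A = ⟪(x : E), s y⟫_A

/-- The range of `1 + t*t` (where `s` plays the role of `t*`). -/
def onePlusRange (t : E →ₗ.[ℂ] F) (s : F →ₗ.[ℂ] E) : Set E :=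
  {u | ∃ (x : t.domain) (h : t x ∈ s.domain), (x : E) + s ⟨t x, h⟩ = u}

/-- `t` is a regular operator with adjoint `s`: it is `A`-linear, densely defined,
closed, adjointable with densely defined adjoint, and `1 + t*t` has dense range. -/
structure IsRegular (t : E →ₗ.[ℂ] F) (s : F →ₗ.[ℂ] E) : Prop where
  amod : AModuleMap A t
  denseDom : Dense (t.domain : Set E)
  closedGraph : IsClosed (t.graph : Set (E × F))
  adj : IsAdjoint A t s
  denseAdjDom : Dense (s.domain : Set F)
  denseOnePlusRange : Dense (onePlusRange t s)

/-- The graph of `t` inside the Hilbert `A`-module `E ⊕ F`. -/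
def graphSet (t : E →ₗ.[ℂ] F) : Set (OldWithCStarModule (E × F)) :=
  {w | ∃ x : t.domain, OldWithCStarModule.equiv (E × F) w = ((x : E), t x)}

/-- The range of `P_F ∘ P_{G(t)^⊥}`, i.e. the image of `G(t)^⊥ ⊆ E ⊕ F` under the
canonical projection onto `F`. -/
def pfRange (t : E →ₗ.[ℂ] F) : Set F :=
  {y | ∃ w ∈ ortho A (graphSet t), (OldWithCStarModule.equiv (E × F) w).2 = y}

end Defs

end RegularOperators

open RegularOperators
variable {A : Type*} [NonUnitalCStarAlgebra A] [PartialOrder A] [StarOrderedRing A]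
variable {E F : Type*}
  [NormedAddCommGroup E] [Module ℂ E] [SMul Aᵐᵒᵖ E] [RightCStarModule A E] [CompleteSpace E]
  [NormedAddCommGroup F] [Module ℂ F] [SMul Aᵐᵒᵖ F] [RightCStarModule A F] [CompleteSpace F]

/-! Decompose `(u, 0) = (x, t x) + (a, b)` along `G(t) ⊕ G(t)^⊥`, so `a = u - x` and `b = -t x`.
Orthogonality of `(a, b)` to every `(x', t x')` says `⟪t x', -b⟫ = ⟪x', a⟫`, i.e. `t x ∈ Dom(t*)`
with `t* (t x) = u - x`, whence `(1 + t*t) x = u`. -/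

section

variable {A : Type*} [NonUnitalCStarAlgebra A] [PartialOrder A]

theorem RightCStarModule.inner_neg_right {E : Type*} [NormedAddCommGroup E] [Module ℂ E]
    [SMul Aᵐᵒᵖ E] [RightCStarModule A E] (x y : E) : ⟪x, -y⟫_A = -⟪x, y⟫_A := by
  simpa only [neg_one_smul] using
    RightCStarModule.inner_smul_right_complex (A := A) (z := (-1 : ℂ)) (x := x) (y := y)

theorem RegularOperators.inner_apply_eq_of_mem_ortho_graphSet {E F : Type*}
    [NormedAddCommGroup E] [Module ℂ E] [Inner A E]
    [NormedAddCommGroup F] [Module ℂ F] [SMul Aᵐᵒᵖ F] [RightCStarModule A F]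
    {t : E →ₗ.[ℂ] F} {v : OldWithCStarModule (E × F)} (hv : v ∈ ortho A (graphSet t))
    {a : E} {y : F} (hva : OldWithCStarModule.equiv (E × F) v = (a, -y)) (x : t.domain) :
    ⟪t x, y⟫_A = ⟪(x : E), a⟫_A := by
  have hx := hv ((OldWithCStarModule.equiv (E × F)).symm ((x : E), t x)) ⟨x, rfl⟩
  change ⟪(x : E), _⟫_A + ⟪t x, _⟫_A = 0 at hx
  rw [hva, RightCStarModule.inner_neg_right, add_neg_eq_zero] at hx
  exact hx.symm

end

theorem onePlus_surjective_of_graph_orthoComplemented_general (t : E →ₗ.[ℂ] F)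
    (hgraph : OrthoComplemented A (graphSet t)) :
    ∀ u : E, ∃ (x : t.domain) (z : E),
      (∀ x' : t.domain, ⟪t x', t x⟫_A = ⟪(x' : E), z⟫_A) ∧ (x : E) + z = u := by
  intro u
  obtain ⟨w, ⟨x, hw⟩, v, hv, hsum⟩ := hgraph ((OldWithCStarModule.equiv (E × F)).symm (u, 0))
  have hsum' : ((u, 0) : E × F) = ((x : E), t x) + OldWithCStarModule.equiv (E × F) v := by
    rw [← hw]
    exact hsum
  have hva : OldWithCStarModule.equiv (E × F) v = (u - x, -t x) :=
    Prod.ext (eq_sub_of_add_eq' (congrArg Prod.fst hsum').symm)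
      (eq_neg_of_add_eq_zero_right (congrArg Prod.snd hsum').symm)
  exact ⟨x, u - x, inner_apply_eq_of_mem_ortho_graphSet hv hva, add_sub_cancel _ _⟩

/-- if the graph of a densely defined `A`-linear operator `t` is
orthogonally complemented in `E ⊕ F` and `Ran(P_F P_{G(t)^⊥})` is dense in its
biorthogonal complement, then `1 + t*t : Dom(t*t) → E` is surjective.  Here `z`
witnesses that `t x ∈ Dom(t*)` with `t*(t x) = z`. -/
theorem onePlus_surjective_of_graph_orthoComplemented (t : E →ₗ.[ℂ] F)
    (hmod : AModuleMap A t) (hdense : Dense (t.domain : Set E))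
    (hgraph : OrthoComplemented A (graphSet t))
    (hbi : closure (pfRange A t) = ortho A (ortho A (pfRange A t))) :
    ∀ u : E, ∃ (x : t.domain) (z : E),
      (∀ x' : t.domain, ⟪t x', t x⟫_A = ⟪(x' : E), z⟫_A) ∧ (x : E) + z = u :=
  onePlus_surjective_of_graph_orthoComplemented_general t hgraph
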